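/- arXiv:2110.03643 — 4 statements merged into one kernel-verified Lean document; each statement's English description precedes it below -/
import Mathlib

section
/- Let φ : ℝ → [0,1] be monotonically non-decreasing and let I be a φ-coherent fuzzy multipreference interpretation of a weighted conditional knowledge base K over a finite domain Δ. Then I is a faithful model of K: for every distinguished concept Cᵢ and all x, y ∈ Δ, if Cᵢᴵ(x) > Cᵢᴵ(y) then Wᵢ(x) > Wᵢ(y), where Wᵢ(z) = Σ_h wₕⁱ·D_{i,h}ᴵ(z) if Cᵢᴵ(z) > 0 and Wᵢ(z) = -∞ otherwise. -/
/-- A φ-coherent fuzzy multipreference interpretation of a weighted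
conditional KB, with φ monotonically non-decreasing, is a faithful model. -/
theorem phi_coherent_model_is_faithful
    {Δ : Type*} [Fintype Δ] [Nonempty Δ]
    {ι : Type*} (H : ι → Type*) [∀ i, Fintype (H i)]
    (w : ∀ i, H i → ℝ)                                 -- weights of the conditionals
    (D : ∀ i, H i → Δ → ℝ)                             -- interpretations of the D_{i,h}
    (hD : ∀ i h x, D i h x ∈ Set.Icc (0:ℝ) 1)
    (C : ι → Δ → ℝ)                                    -- interpretations of the Cᵢ
    (hC : ∀ i x, C i x ∈ Set.Icc (0:ℝ) 1)
    (φ : ℝ → ℝ) (hφ01 : ∀ x, φ x ∈ Set.Icc (0:ℝ) 1) (hφ : Monotone φ)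
    (hcoh : ∀ i x, C i x = φ (∑ h, w i h * D i h x))   -- φ-coherence
    (W : ι → Δ → WithBot ℝ)
    (hW : ∀ i x, W i x = if 0 < C i x then ((∑ h, w i h * D i h x : ℝ) : WithBot ℝ) else ⊥) :
    ∀ i x y, C i x > C i y → W i x > W i y := by
  intro i x y hxy
  have hx0 : 0 < C i x := lt_of_le_of_lt (hC i y).1 hxy
  have hWx : W i x = ((∑ h, w i h * D i h x : ℝ) : WithBot ℝ) := by
    rw [hW]; simp [hx0]
  by_cases hy0 : 0 < C i y
  · have hWy : W i y = ((∑ h, w i h * D i h y : ℝ) : WithBot ℝ) := by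
      rw [hW]; simp [hy0]
    rw [hWx, hWy]
    exact_mod_cast lt_of_not_ge fun hle => absurd hxy (not_lt.2 (by
      rw [hcoh i x, hcoh i y]; exact hφ hle))
  · have hWy : W i y = ⊥ := by rw [hW]; simp [hy0]
    rw [hWx, hWy]
    exact WithBot.bot_lt_coe _
end

section
/- Let φ : ℝ → [0,1] be strictly monotonically increasing and let I be a φ-coherent fuzzy multipreference interpretation of a weighted conditional knowledge base K over a finite domain Δ. Then I is a coherent model of K: for every distinguished concept Cᵢ and all x, y ∈ Δ, Cᵢᴵ(x) > Cᵢᴵ(y) if and only if Wᵢ(x) > Wᵢ(y). -/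
/-- A φ-coherent fuzzy multipreference interpretation of a weighted
conditional KB, with φ strictly increasing, is a coherent model. -/
theorem phi_coherent_model_is_coherent
    {Δ : Type*} [Fintype Δ] [Nonempty Δ]
    {ι : Type*} (H : ι → Type*) [∀ i, Fintype (H i)]
    (w : ∀ i, H i → ℝ)
    (D : ∀ i, H i → Δ → ℝ)
    (hD : ∀ i h x, D i h x ∈ Set.Icc (0:ℝ) 1)
    (C : ι → Δ → ℝ)
    (hC : ∀ i x, C i x ∈ Set.Icc (0:ℝ) 1)
    (φ : ℝ → ℝ) (hφ01 : ∀ x, φ x ∈ Set.Icc (0:ℝ) 1) (hφ : StrictMono φ)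
    (hcoh : ∀ i x, C i x = φ (∑ h, w i h * D i h x))
    (W : ι → Δ → WithBot ℝ)
    (hW : ∀ i x, W i x = if 0 < C i x then ((∑ h, w i h * D i h x : ℝ) : WithBot ℝ) else ⊥) :
    ∀ i x y, C i x > C i y ↔ W i x > W i y := by
  intro i x y
  have hsum : ∀ z, C i x > C i z ↔ (∑ h, w i h * D i h x) > (∑ h, w i h * D i h z) := by
    intro z
    rw [hcoh i x, hcoh i z]
    exact ⟨fun h => hφ.lt_iff_lt.mp h, fun h => hφ h⟩
  constructor
  · intro hxy
    have hx0 : 0 < C i x := lt_of_le_of_lt (hC i y).1 hxy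
    rw [hW i x, hW i y, if_pos hx0]
    by_cases hy0 : 0 < C i y
    · rw [if_pos hy0]
      exact_mod_cast (hsum y).mp hxy
    · rw [if_neg hy0]
      exact WithBot.bot_lt_coe _
  · intro hxy
    rw [hW i x, hW i y] at hxy
    by_cases hx0 : 0 < C i x
    · by_cases hy0 : 0 < C i y
      · rw [if_pos hx0, if_pos hy0] at hxy
        exact (hsum y).mpr (by exact_mod_cast hxy)
      · have hy : C i y = 0 := le_antisymm (not_lt.mp hy0) (hC i y).1
        rw [hy]; exact hx0
    · rw [if_neg hx0] at hxy
      exact absurd hxy (by simp)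
end

section
/- Let Σ be a finite nonempty set of φ-coherent labellings of a weighted argumentation graph G = ⟨A, R, π⟩, where φ : ℝ → (0,1] is strictly monotonically increasing. Define the fuzzy interpretation I over domain Σ by Aᴵ(σ) = σ(A) for each argument A ∈ A (viewed as an atomic concept). Then I is a coherent multipreference model of the conditional knowledge base K^G = {(T(Aᵢ) ⊑ Aⱼ, w_{ji}) | (Aⱼ,Aᵢ) ∈ R, π(Aⱼ,Aᵢ) = w_{ji}}: for every argument Aᵢ with R⁻(Aᵢ) ≠ ∅ and all σ, σ' ∈ Σ, σ(Aᵢ) > σ'(Aᵢ) if and only if Wᵢ(σ) > Wᵢ(σ'), where Wᵢ(σ) = Σ_{(Aⱼ,Aᵢ)∈R} w_{ji}·σ(Aⱼ) if σ(Aᵢ) > 0 and Wᵢ(σ) = -∞ otherwise. -/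
/-- The fuzzy interpretation built over a finite nonempty set Σ of
φ-coherent labellings of a weighted argumentation graph G, with φ : ℝ → (0,1]
strictly increasing, is a coherent multipreference model of K^G. -/
theorem labellings_give_coherent_model
    {A : Type*} [Fintype A] (R : A → A → Prop) [∀ a b, Decidable (R a b)]
    (π : A → A → ℝ)
    (φ : ℝ → ℝ) (hφ01 : ∀ x, φ x ∈ Set.Ioc (0:ℝ) 1) (hφ : StrictMono φ)
    (S : Finset (A → ℝ)) (hSne : S.Nonempty)
    (hS01 : ∀ σ ∈ S, ∀ a, σ a ∈ Set.Icc (0:ℝ) 1)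
    (hScoh : ∀ σ ∈ S, ∀ a, (∃ b, R b a) →
        σ a = φ (∑ b, if R b a then π b a * σ b else 0))
    (W : A → (A → ℝ) → WithBot ℝ)
    (hW : ∀ i σ, W i σ = if 0 < σ i
        then ((∑ b, if R b i then π b i * σ b else 0 : ℝ) : WithBot ℝ) else ⊥) :
    ∀ i, (∃ b, R b i) → ∀ σ ∈ S, ∀ σ' ∈ S, (σ i > σ' i ↔ W i σ > W i σ') := by
  intro i hi σ hσ σ' hσ'
  have e1 := hScoh σ hσ i hi
  have e2 := hScoh σ' hσ' i hi
  have p1 : 0 < σ i := e1 ▸ (hφ01 _).1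
  have p2 : 0 < σ' i := e2 ▸ (hφ01 _).1
  rw [hW, hW, if_pos p1, if_pos p2, gt_iff_lt, gt_iff_lt, WithBot.coe_lt_coe, e1, e2]
  exact hφ.lt_iff_lt
end

section
/- Let Σ be a finite nonempty set of φ-coherent labellings of a weighted argumentation graph G, where φ : ℝ → [0,1] is monotonically non-decreasing. Define the fuzzy interpretation I over domain Σ by Aᴵ(σ) = σ(A). Then I is a faithful multipreference model of K^G: for every argument Aᵢ with R⁻(Aᵢ) ≠ ∅ and all σ, σ' ∈ Σ, if σ(Aᵢ) > σ'(Aᵢ) then Wᵢ(σ) > Wᵢ(σ'). -/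
/-- The fuzzy interpretation built over a finite nonempty set Σ of
φ-coherent labellings of a weighted argumentation graph G, with φ monotonically
non-decreasing, is a faithful multipreference model of K^G. -/
theorem labellings_give_faithful_model
    {A : Type*} [Fintype A] (R : A → A → Prop) [∀ a b, Decidable (R a b)]
    (π : A → A → ℝ)
    (φ : ℝ → ℝ) (hφ01 : ∀ x, φ x ∈ Set.Icc (0:ℝ) 1) (hφ : Monotone φ)
    (S : Finset (A → ℝ)) (hSne : S.Nonempty)
    (hS01 : ∀ σ ∈ S, ∀ a, σ a ∈ Set.Icc (0:ℝ) 1)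
    (hScoh : ∀ σ ∈ S, ∀ a, (∃ b, R b a) →
        σ a = φ (∑ b, if R b a then π b a * σ b else 0))
    (W : A → (A → ℝ) → WithBot ℝ)
    (hW : ∀ i σ, W i σ = if 0 < σ i
        then ((∑ b, if R b i then π b i * σ b else 0 : ℝ) : WithBot ℝ) else ⊥) :
    ∀ i, (∃ b, R b i) → ∀ σ ∈ S, ∀ σ' ∈ S, σ i > σ' i → W i σ > W i σ' := by
  intro i hi σ hσ σ' hσ' hgt
  have hσpos : 0 < σ i := lt_of_le_of_lt (hS01 σ' hσ' i).1 hgt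
  rw [hW, hW, if_pos hσpos]
  by_cases hσ'pos : 0 < σ' i
  · rw [if_pos hσ'pos]
    have hsum : (∑ b, if R b i then π b i * σ' b else 0) <
        (∑ b, if R b i then π b i * σ b else 0) := by
      by_contra h
      push_neg at h
      have := hφ h
      rw [← hScoh σ hσ i hi, ← hScoh σ' hσ' i hi] at this
      exact absurd hgt (not_lt.mpr this)
    exact_mod_cast hsum
  · rw [if_neg hσ'pos]
    exact WithBot.bot_lt_coe _
end
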